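/- Let η(x,y) = ( i(1+x)/(1−x), 2(1−i)y/(x−1)³ ) and ρ(x,y) = (−x, iy), both automorphisms of the curve y² = x(x⁴−1). Then ρ∘η∘ρ⁻¹ is not a power of η; in particular the cyclic subgroups ⟨η⟩ and ρ⟨η⟩ρ⁻¹ of order 6 are distinct. -/
import Mathlib


open Complex

/-- The genus 2 curve `y² = x(x⁴ − 1)` as a set of affine points. -/
def CurveX5 : Type := {p : ℂ × ℂ // p.2 ^ 2 = p.1 * (p.1 ^ 4 - 1)}

/-- The point (0,0) on the curve. -/
def P0 : CurveX5 := ⟨(0, 0), by norm_num⟩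
/-- The point (i,0) on the curve. -/
def P1 : CurveX5 := ⟨(I, 0), by simp [Complex.I_pow_four]⟩
/-- The point (-1,0) on the curve. -/
def P2 : CurveX5 := ⟨(-1, 0), by norm_num⟩

theorem conjugate_not_power_of_eta :
    ∀ η ρ : Equiv.Perm CurveX5,
      (∀ p : CurveX5, p.val.1 ≠ 1 →
        (η p).val = (I * (1 + p.val.1) / (1 - p.val.1),
          2 * (1 - I) * p.val.2 / (p.val.1 - 1) ^ 3)) →
      (∀ p : CurveX5, (ρ p).val = (-p.val.1, I * p.val.2)) →
      (¬ ∃ n : ℤ, ρ * η * ρ⁻¹ = η ^ n) ∧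
        Subgroup.zpowers (ρ * η * ρ⁻¹) ≠ Subgroup.zpowers η := by
  intro η ρ hη hρ
  have hIne1 : (I : ℂ) ≠ 1 := by
    intro h
    have h2 := Complex.I_sq
    rw [h] at h2
    norm_num at h2
  have hI1 : (1 : ℂ) - I ≠ 0 := by
    intro h
    exact hIne1 (by linear_combination -h)
  -- η P0 = P1
  have h01 : η P0 = P1 := by
    apply Subtype.ext
    rw [hη P0 (by simp [P0])]
    simp [P0, P1]
  -- η P1 = P2
  have h12 : η P1 = P2 := by
    apply Subtype.ext
    have hx : P1.val.1 ≠ 1 := by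
      simp only [P1]
      exact fun h => hIne1 h
    rw [hη P1 hx]
    simp only [P1, P2, Prod.mk.injEq]
    constructor
    · field_simp
      linear_combination (1 : ℂ) * Complex.I_sq
    · simp
  -- η P2 = P0
  have h20 : η P2 = P0 := by
    apply Subtype.ext
    rw [hη P2 (by norm_num [P2])]
    simp [P2, P0]
  -- η^3 fixes each of the three points
  have h3 : ∀ p : CurveX5, p = P0 ∨ p = P1 ∨ p = P2 → (η ^ 3) p = p := by
    rintro p (rfl | rfl | rfl) <;>
      simp [pow_succ, Equiv.Perm.mul_apply, h01, h12, h20]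
  -- the orbit of P0 under all integer powers
  have orbit : ∀ n : ℤ, (η ^ n) P0 = P0 ∨ (η ^ n) P0 = P1 ∨ (η ^ n) P0 = P2 := by
    intro n
    have hdecomp : η ^ n = (η ^ (3 : ℤ)) ^ (n / 3) * η ^ (n % 3) := by
      rw [← zpow_mul, ← zpow_add]
      congr 1
      omega
    have hr : n % 3 = 0 ∨ n % 3 = 1 ∨ n % 3 = 2 := by omega
    have key : (η ^ (n % 3)) P0 = P0 ∨ (η ^ (n % 3)) P0 = P1 ∨ (η ^ (n % 3)) P0 = P2 := by
      rcases hr with h | h | h <;> rw [h]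
      · left; simp
      · right; left; simpa using h01
      · right; right
        have : η ^ (2 : ℤ) = η * η := by
          rw [show (2 : ℤ) = 1 + 1 by norm_num, zpow_add, zpow_one]
        rw [this, Equiv.Perm.mul_apply, h01, h12]
    have fix3 : ∀ p : CurveX5, p = P0 ∨ p = P1 ∨ p = P2 →
        ((η ^ (3 : ℤ)) ^ (n / 3)) p = p := by
      intro p hp
      have h3' : (η ^ (3 : ℤ)) p = p := by
        rw [show (3 : ℤ) = ((3 : ℕ) : ℤ) from rfl, zpow_natCast]
        exact h3 p hp
      exact Equiv.Perm.zpow_apply_eq_self_of_apply_eq_self h3' (n / 3)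
    rw [hdecomp, Equiv.Perm.mul_apply]
    rcases key with h | h | h <;> rw [h]
    · left; exact fix3 P0 (Or.inl rfl)
    · right; left; exact fix3 P1 (Or.inr (Or.inl rfl))
    · right; right; exact fix3 P2 (Or.inr (Or.inr rfl))
  -- ρ fixes P0
  have hρ0 : ρ P0 = P0 := by
    apply Subtype.ext
    rw [hρ P0]
    simp [P0]
  have hρinv0 : ρ⁻¹ P0 = P0 := by
    have := congrArg (fun q => ρ⁻¹ q) hρ0
    simpa using this.symm
  -- (ρ * η * ρ⁻¹) P0 = (-I, 0)
  have hconj : ((ρ * η * ρ⁻¹) P0).val = (-I, 0) := by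
    have : (ρ * η * ρ⁻¹) P0 = ρ (η (ρ⁻¹ P0)) := rfl
    rw [this, hρinv0, h01, hρ P1]
    simp [P1]
  have main : ¬ ∃ n : ℤ, ρ * η * ρ⁻¹ = η ^ n := by
    rintro ⟨n, hn⟩
    have := orbit n
    rw [← hn] at this
    rcases this with h | h | h <;>
      · have hv := congrArg Subtype.val h
        rw [hconj] at hv
        simp only [P0, P1, P2, Prod.mk.injEq] at hv
        obtain ⟨hv1, -⟩ := hv
        first
          | exact Complex.I_ne_zero (by linear_combination -hv1)
          | exact Complex.I_ne_zero (by linear_combination -hv1/2)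
          | exact hIne1 (by linear_combination -hv1)
  refine ⟨main, fun heq => main ?_⟩
  have hmem : ρ * η * ρ⁻¹ ∈ Subgroup.zpowers η := by
    rw [← heq]; exact Subgroup.mem_zpowers _
  obtain ⟨n, hn⟩ := hmem
  exact ⟨n, hn.symm⟩
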